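/- Happel–Ringel lemma: let Λ be a finite dimensional hereditary algebra and M an indecomposable Λ-module with Ext^1_Λ(M, M) = 0. Then End_Λ(M) is a division ring. -/

import Mathlib

universe u v

/-- `Ext^1_Λ(M, N) = 0`, expressed by the splitting of every short exact sequence
`0 → N → E → M → 0` of `Λ`-modules. -/
def Ext1Zero (Λ : Type u) [Ring Λ] (M N : Type v) [AddCommGroup M] [Module Λ M]
    [AddCommGroup N] [Module Λ N] : Prop :=
  ∀ (E : Type v) [AddCommGroup E] [Module Λ E] (i : N →ₗ[Λ] E) (p : E →ₗ[Λ] M),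
    Function.Injective i → Function.Surjective p →
    LinearMap.range i = LinearMap.ker p →
    ∃ s : M →ₗ[Λ] E, p.comp s = LinearMap.id

/-- A ring is (left) hereditary if every left ideal is projective as a module;
equivalently, every submodule of a projective module is projective. -/
def IsHereditaryRing (Λ : Type u) [Ring Λ] : Prop :=
  ∀ I : Submodule Λ Λ, Module.Projective Λ I

/-- A module is indecomposable if it is nonzero and admits no nontrivial
direct sum decomposition. -/
def IsIndecomposableModule (Λ : Type u) [Ring Λ] (M : Type v) [AddCommGroup M]
    [Module Λ M] : Prop :=
  Nontrivial M ∧ ∀ A B : Submodule Λ M, IsCompl A B → A = ⊥ ∨ B = ⊥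

section Aux

variable {Λ : Type u} [Ring Λ]

/-- If `q : A → B` is surjective with `B` projective and `ker q` projective, then `A`
is projective. -/
private lemma projective_of_surjective_onto_projective
    {A B : Type v} [AddCommGroup A] [Module Λ A] [AddCommGroup B] [Module Λ B]
    [Module.Projective Λ B] (q : A →ₗ[Λ] B) (hq : Function.Surjective q)
    (hker : Module.Projective Λ (LinearMap.ker q)) : Module.Projective Λ A := by
  obtain ⟨s, hs⟩ := Module.projective_lifting_property q LinearMap.id hq
  have hqs : ∀ b, q (s b) = b := fun b => congrArg (fun g => g b) hs
  haveI := hker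
  refine Module.Projective.of_split (M := ↥(LinearMap.ker q) × B)
    (LinearMap.prod
      (LinearMap.codRestrict (LinearMap.ker q) (LinearMap.id - s.comp q) ?_) q)
    ((LinearMap.ker q).subtype.comp (LinearMap.fst Λ _ B) +
      s.comp (LinearMap.snd Λ _ B)) ?_
  · intro a
    simp [hqs]
  · ext a
    simp

/-- Over a hereditary ring, every submodule of a finite free module is projective. -/
private lemma projective_submodule_pi (hher : IsHereditaryRing Λ) :
    ∀ (n : ℕ) (N : Submodule Λ (Fin n → Λ)), Module.Projective Λ N := by
  intro n
  induction n with
  | zero =>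
    intro N
    infer_instance
  | succ n ih =>
    intro N
    set φ : ↥N →ₗ[Λ] Λ := (LinearMap.proj (Fin.last n)).comp N.subtype with hφdef
    haveI hI : Module.Projective Λ (LinearMap.range φ) := hher _
    have hq : Function.Surjective φ.rangeRestrict := φ.surjective_rangeRestrict
    refine projective_of_surjective_onto_projective φ.rangeRestrict hq ?_
    set ψ : ↥(LinearMap.ker φ.rangeRestrict) →ₗ[Λ] (Fin n → Λ) :=
      (LinearMap.funLeft Λ Λ Fin.castSucc).comp
        (N.subtype.comp (LinearMap.ker φ.rangeRestrict).subtype) with hψdef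
    have hψ : Function.Injective ψ := by
      rw [injective_iff_map_eq_zero]
      intro x hx
      have hker' : φ.rangeRestrict (x : ↥N) = 0 := x.2
      have hlast : (x : ↥N).1 (Fin.last n) = 0 := congrArg Subtype.val hker'
      have hcast : ∀ i : Fin n, (x : ↥N).1 (Fin.castSucc i) = 0 := by
        intro i
        have := congrArg (fun g => g i) hx
        simpa [ψ, LinearMap.funLeft] using this
      have hval : ((x : ↥N) : Fin (n + 1) → Λ) = 0 := by
        funext i
        induction i using Fin.lastCases with
        | last => exact hlast
        | cast i => exact hcast i
      exact Subtype.ext (Subtype.ext hval)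
    haveI := ih (LinearMap.range ψ)
    exact Module.Projective.of_equiv (LinearEquiv.ofInjective ψ hψ).symm

/-- If `Ext^1(M, M) = 0` and `0 → A → E → M → 0` is exact, then every map `A → M`
extends to `E`. -/
private lemma exists_extension_of_ext1zero
    {M : Type v} [AddCommGroup M] [Module Λ M] (hrigid : Ext1Zero Λ M M)
    {A E : Type v} [AddCommGroup A] [Module Λ A] [AddCommGroup E] [Module Λ E]
    (κ : A →ₗ[Λ] M) (i : A →ₗ[Λ] E) (hi : Function.Injective i)
    (π : E →ₗ[Λ] M) (hπ : Function.Surjective π)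
    (hker : LinearMap.range i = LinearMap.ker π) :
    ∃ h : E →ₗ[Λ] M, h.comp i = κ := by
  classical
  set w : A →ₗ[Λ] M × E := κ.prod (-i) with hwdef
  set W : Submodule Λ (M × E) := LinearMap.range w with hWdef
  set j : M →ₗ[Λ] ((M × E) ⧸ W) := W.mkQ.comp (LinearMap.inl Λ M E) with hjdef
  have hπi : ∀ a, π (i a) = 0 := by
    intro a
    have : i a ∈ LinearMap.ker π := hker ▸ LinearMap.mem_range_self i a
    exact this
  have hWker : W ≤ LinearMap.ker (π.comp (LinearMap.snd Λ M E)) := by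
    rintro _ ⟨a, rfl⟩
    simp [w, hπi]
  set π'' : ((M × E) ⧸ W) →ₗ[Λ] M := W.liftQ (π.comp (LinearMap.snd Λ M E)) hWker
    with hπ''def
  have hπ''mk : ∀ me : M × E, π'' (Submodule.Quotient.mk me) = π me.2 := by
    intro me; rfl
  have hjmk : ∀ m, j m = Submodule.Quotient.mk (m, (0 : E)) := by intro m; rfl
  have hj : Function.Injective j := by
    rw [injective_iff_map_eq_zero]
    intro m hm
    rw [hjmk, Submodule.Quotient.mk_eq_zero] at hm
    obtain ⟨a, ha⟩ := hm
    have h1 : κ a = m := congrArg Prod.fst ha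
    have h2 : -(i a) = 0 := congrArg Prod.snd ha
    have : i a = i 0 := by simpa [neg_eq_zero] using h2
    rw [hi this, map_zero] at h1
    exact h1.symm
  have hπ''s : Function.Surjective π'' := by
    intro m
    obtain ⟨e, he⟩ := hπ m
    exact ⟨Submodule.Quotient.mk ((0 : M), e), by rw [hπ''mk]; exact he⟩
  have hrange : LinearMap.range j = LinearMap.ker π'' := by
    apply le_antisymm
    · rintro _ ⟨m, rfl⟩
      rw [LinearMap.mem_ker, hjmk, hπ''mk]
      exact map_zero π
    · rintro z hz
      obtain ⟨⟨m, e⟩, rfl⟩ := W.mkQ_surjective z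
      rw [LinearMap.mem_ker, Submodule.mkQ_apply, hπ''mk] at hz
      have : e ∈ LinearMap.range i := hker.symm ▸ hz
      obtain ⟨a, rfl⟩ := this
      refine ⟨m + κ a, ?_⟩
      rw [hjmk, Submodule.mkQ_apply, Submodule.Quotient.eq]
      exact ⟨a, by simp [w]⟩
  obtain ⟨s, hs⟩ := hrigid _ j π'' hj hπ''s hrange
  have hπ''s' : ∀ m, π'' (s m) = m := fun m => congrArg (fun g => g m) hs
  set t : E →ₗ[Λ] ((M × E) ⧸ W) := W.mkQ.comp (LinearMap.inr Λ M E) - s.comp π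
    with htdef
  have ht : ∀ e, t e ∈ LinearMap.range j := by
    intro e
    rw [hrange, LinearMap.mem_ker]
    have : t e = Submodule.Quotient.mk ((0 : M), e) - s (π e) := rfl
    rw [this, map_sub, hπ''mk, hπ''s']
    simp
  set jE : M ≃ₗ[Λ] ↥(LinearMap.range j) := LinearEquiv.ofInjective j hj with hjEdef
  refine ⟨(jE.symm : ↥(LinearMap.range j) →ₗ[Λ] M).comp
    (LinearMap.codRestrict (LinearMap.range j) t ht), ?_⟩
  ext a
  have htia : t (i a) = j (κ a) := by
    have h1 : t (i a) = Submodule.Quotient.mk ((0 : M), i a) - s (π (i a)) := rfl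
    rw [h1, hπi, map_zero, sub_zero, hjmk, Submodule.Quotient.eq]
    exact ⟨-a, by simp [w]⟩
  have : LinearMap.codRestrict (LinearMap.range j) t ht (i a) = jE (κ a) := by
    apply Subtype.ext
    rw [LinearMap.codRestrict_apply]
    rw [htia]
    exact (LinearEquiv.ofInjective_apply j (κ a)).symm
  simp only [LinearMap.coe_comp, Function.comp_apply, this]
  exact jE.symm_apply_apply (κ a)

end Aux

/-- **Happel–Ringel lemma.** Over a finite dimensional hereditary algebra, the
endomorphism ring of an indecomposable rigid module is a division ring. -/
theorem happel_ringel_division_ring (K : Type u) [Field K] (Λ : Type u) [Ring Λ]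
    [Algebra K Λ] [FiniteDimensional K Λ] (hher : IsHereditaryRing Λ)
    (M : Type u) [AddCommGroup M] [Module Λ M] [Module.Finite Λ M]
    (hind : IsIndecomposableModule Λ M) (hrigid : Ext1Zero Λ M M) :
    ∀ f : M →ₗ[Λ] M, f ≠ 0 → Function.Bijective f := by
  -- The ring `Λ` is Artinian and Noetherian, hence so is `M`.
  haveI : IsNoetherian K Λ := IsNoetherian.iff_fg.mpr ‹_›
  haveI : IsNoetherianRing Λ := isNoetherian_of_tower K (inferInstance : IsNoetherian K Λ)
  haveI : IsArtinianRing Λ := IsArtinianRing.of_finite K Λ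
  haveI : IsNoetherian Λ M := isNoetherian_of_isNoetherianRing_of_finite Λ M
  haveI : IsArtinian Λ M := isArtinian_of_fg_of_artinian'
  intro f hf
  suffices hinj : Function.Injective f by
    exact ⟨hinj, IsArtinian.surjective_of_injective_endomorphism f hinj⟩
  by_contra hninj
  -- Setup: a finite free presentation of `M`.
  obtain ⟨n, π₀, hπ₀⟩ := Module.Finite.exists_fin' Λ M
  set U : Submodule Λ M := LinearMap.range f with hUdef
  set Kk : Submodule Λ M := LinearMap.ker f with hKkdef
  have hUne : U ≠ ⊥ := fun h => hf (LinearMap.range_eq_bot.mp h)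
  set Q : Submodule Λ (Fin n → Λ) := U.comap π₀ with hQdef
  haveI hQproj : Module.Projective Λ ↥Q := projective_submodule_pi hher n Q
  -- the corestriction `M → U` of `f`
  set qM : M →ₗ[Λ] ↥U := f.rangeRestrict with hqMdef
  have hqM : Function.Surjective qM := f.surjective_rangeRestrict
  -- `π₀` restricted to `Q`, landing in `U`
  set πQ : ↥Q →ₗ[Λ] ↥U :=
    LinearMap.codRestrict U (π₀.comp Q.subtype) (fun x => x.2) with hπQdef
  have hπQs : Function.Surjective πQ := by
    rintro ⟨u, hu⟩
    obtain ⟨p, hp⟩ := hπ₀ u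
    have hpQ : p ∈ Q := by
      show π₀ p ∈ U
      rw [hp]; exact hu
    exact ⟨⟨p, hpQ⟩, Subtype.ext hp⟩
  -- lift `πQ` through `qM` using projectivity of `Q`
  obtain ⟨ρ, hρ0⟩ := Module.projective_lifting_property qM πQ hqM
  have hρ : ∀ x : ↥Q, f (ρ x) = π₀ (x : Fin n → Λ) := by
    intro x
    have := congrArg (fun g => (g x : M)) hρ0
    exact this
  -- lift `f ∘ π₀ : P → U` through `πQ` using projectivity of `P`
  obtain ⟨y, hy0⟩ := Module.projective_lifting_property πQ
    (LinearMap.codRestrict U (f.comp π₀) (fun p => LinearMap.mem_range_self f (π₀ p))) hπQs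
  have hy : ∀ p, π₀ ((y p : Fin n → Λ)) = f (π₀ p) := by
    intro p
    have := congrArg (fun g => (g p : M)) hy0
    exact this
  -- the map `x : P → Kk`,  `x p = π₀ p - ρ (y p)`
  have hxmem : ∀ p, π₀ p - ρ (y p) ∈ Kk := by
    intro p
    show f (π₀ p - ρ (y p)) = 0
    rw [map_sub, hρ, hy, sub_self]
  set x : (Fin n → Λ) →ₗ[Λ] ↥Kk :=
    LinearMap.codRestrict Kk (π₀ - (ρ.comp y)) hxmem with hxdef
  have hxval : ∀ p, ((x p : M)) = π₀ p - ρ (y p) := fun p => rfl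
  -- `Ω = ker π₀ ⊆ Q`
  have hΩQ : LinearMap.ker π₀ ≤ Q := by
    intro ω hω
    show π₀ ω ∈ U
    rw [LinearMap.mem_ker.mp hω]
    exact U.zero_mem
  have hθmem : ∀ ω : ↥(LinearMap.ker π₀), ρ (Submodule.inclusion hΩQ ω) ∈ Kk := by
    intro ω
    show f (ρ (Submodule.inclusion hΩQ ω)) = 0
    rw [hρ]
    exact LinearMap.mem_ker.mp ω.2
  set θ : ↥(LinearMap.ker π₀) →ₗ[Λ] ↥Kk :=
    LinearMap.codRestrict Kk (ρ.comp (Submodule.inclusion hΩQ)) hθmem with hθdef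
  have hθval : ∀ ω, ((θ ω : M)) = ρ (Submodule.inclusion hΩQ ω) := fun ω => rfl
  -- the relation submodule `W` and the extension module `E`
  set w : ↥(LinearMap.ker π₀) →ₗ[Λ] ↥Kk × (Fin n → Λ) :=
    θ.prod (-(LinearMap.ker π₀).subtype) with hwdef
  set W : Submodule Λ (↥Kk × (Fin n → Λ)) := LinearMap.range w with hWdef
  set i : ↥Kk →ₗ[Λ] ((↥Kk × (Fin n → Λ)) ⧸ W) := W.mkQ.comp (LinearMap.inl Λ _ _)
    with hidef
  have himk : ∀ k : ↥Kk, i k = Submodule.Quotient.mk (k, (0 : Fin n → Λ)) :=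
    fun k => rfl
  have hWker : W ≤ LinearMap.ker (π₀.comp (LinearMap.snd Λ ↥Kk (Fin n → Λ))) := by
    rintro _ ⟨ω, rfl⟩
    have : π₀ (-(ω : Fin n → Λ)) = 0 := by
      rw [map_neg, LinearMap.mem_ker.mp ω.2, neg_zero]
    simp only [w, LinearMap.prod_apply, LinearMap.coe_comp, LinearMap.mem_ker, Function.comp_apply, LinearMap.snd_apply, Pi.prod, LinearMap.neg_apply, Submodule.coe_subtype] ; exact this
  set π : ((↥Kk × (Fin n → Λ)) ⧸ W) →ₗ[Λ] M :=
    W.liftQ (π₀.comp (LinearMap.snd Λ ↥Kk (Fin n → Λ))) hWker with hπdef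
  have hπmk : ∀ z : ↥Kk × (Fin n → Λ), π (Submodule.Quotient.mk z) = π₀ z.2 :=
    fun z => rfl
  have hπs : Function.Surjective π := by
    intro m
    obtain ⟨p, hp⟩ := hπ₀ m
    exact ⟨Submodule.Quotient.mk ((0 : ↥Kk), p), by rw [hπmk]; exact hp⟩
  have hii : Function.Injective i := by
    rw [injective_iff_map_eq_zero]
    intro k hk
    rw [himk, Submodule.Quotient.mk_eq_zero] at hk
    obtain ⟨ω, hω⟩ := hk
    have h2 : -((ω : Fin n → Λ)) = 0 := congrArg Prod.snd hω
    have hω0 : ω = 0 := Subtype.ext (by simpa [neg_eq_zero] using h2)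
    have h1 : θ ω = k := congrArg Prod.fst hω
    rw [hω0, map_zero] at h1
    exact h1.symm
  have hkerπ : LinearMap.range i = LinearMap.ker π := by
    apply le_antisymm
    · rintro _ ⟨k, rfl⟩
      rw [LinearMap.mem_ker, himk, hπmk]
      exact map_zero π₀
    · rintro z hz
      obtain ⟨⟨k, p⟩, rfl⟩ := W.mkQ_surjective z
      rw [LinearMap.mem_ker, Submodule.mkQ_apply, hπmk] at hz
      have hpΩ : p ∈ LinearMap.ker π₀ := hz
      refine ⟨k + θ ⟨p, hpΩ⟩, ?_⟩
      rw [himk, Submodule.mkQ_apply, Submodule.Quotient.eq]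
      refine ⟨⟨p, hpΩ⟩, ?_⟩
      have : w ⟨p, hpΩ⟩ = (θ ⟨p, hpΩ⟩, -p) := rfl
      rw [this]
      ext <;> simp
  -- the map `g : M → E` with `π ∘ g = f`
  set G : (Fin n → Λ) →ₗ[Λ] ((↥Kk × (Fin n → Λ)) ⧸ W) :=
    W.mkQ.comp (x.prod (Q.subtype.comp y)) with hGdef
  have hGmk : ∀ p, G p = Submodule.Quotient.mk (x p, (y p : Fin n → Λ)) :=
    fun p => rfl
  have hGker : LinearMap.ker π₀ ≤ LinearMap.ker G := by
    intro ω hω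
    rw [LinearMap.mem_ker, hGmk, Submodule.Quotient.mk_eq_zero]
    have hyω : ((y ω : Fin n → Λ)) ∈ LinearMap.ker π₀ := by
      rw [LinearMap.mem_ker, hy, LinearMap.mem_ker.mp hω, map_zero]
    refine ⟨-⟨(y ω : Fin n → Λ), hyω⟩, ?_⟩
    have hwval : w (-⟨(y ω : Fin n → Λ), hyω⟩) =
        (-θ ⟨(y ω : Fin n → Λ), hyω⟩, (y ω : Fin n → Λ)) := by
      simp [w]
    rw [hwval]
    have hfst : x ω = -θ ⟨(y ω : Fin n → Λ), hyω⟩ := by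
      apply Subtype.ext
      rw [hxval]
      show π₀ ω - ρ (y ω) = -(ρ (Submodule.inclusion hΩQ ⟨(y ω : Fin n → Λ), hyω⟩))
      rw [LinearMap.mem_ker.mp hω]
      have : Submodule.inclusion hΩQ ⟨(y ω : Fin n → Λ), hyω⟩ = y ω := rfl
      rw [this, zero_sub]
    exact Prod.ext hfst.symm rfl
  set eqv : ((Fin n → Λ) ⧸ LinearMap.ker π₀) ≃ₗ[Λ] M :=
    π₀.quotKerEquivOfSurjective hπ₀ with heqvdef
  have heqv : ∀ p, eqv (Submodule.Quotient.mk p) = π₀ p := by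
    intro p
    simp [eqv, LinearMap.quotKerEquivOfSurjective, LinearMap.quotKerEquivRange_apply_mk]
  set g : M →ₗ[Λ] ((↥Kk × (Fin n → Λ)) ⧸ W) :=
    ((LinearMap.ker π₀).liftQ G hGker).comp (eqv.symm : M →ₗ[Λ] _) with hgdef
  have hgπ₀ : ∀ p, g (π₀ p) = Submodule.Quotient.mk (x p, (y p : Fin n → Λ)) := by
    intro p
    have h1 : eqv.symm (π₀ p) = Submodule.Quotient.mk p := by
      apply eqv.injective
      rw [LinearEquiv.apply_symm_apply, heqv]
    show (LinearMap.ker π₀).liftQ G hGker (eqv.symm (π₀ p)) = _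
    rw [h1, Submodule.liftQ_apply, hGmk]
  have hπg : ∀ m, π (g m) = f m := by
    intro m
    obtain ⟨p, rfl⟩ := hπ₀ m
    rw [hgπ₀, hπmk, hy]
  have hgκ : ∀ k : ↥Kk, g (k : M) = i k := by
    intro k
    obtain ⟨p, hp⟩ := hπ₀ (k : M)
    rw [← hp, hgπ₀, himk, Submodule.Quotient.eq]
    have hyp : ((y p : Fin n → Λ)) ∈ LinearMap.ker π₀ := by
      rw [LinearMap.mem_ker, hy, hp]
      exact k.2
    refine ⟨-⟨(y p : Fin n → Λ), hyp⟩, ?_⟩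
    have hwval : w (-⟨(y p : Fin n → Λ), hyp⟩) =
        (-θ ⟨(y p : Fin n → Λ), hyp⟩, (y p : Fin n → Λ)) := by simp [w]
    rw [hwval]
    have hfst : x p - k = -θ ⟨(y p : Fin n → Λ), hyp⟩ := by
      apply Subtype.ext
      rw [AddSubgroupClass.coe_sub]
      show ((x p : M)) - (k : M) = -(ρ (Submodule.inclusion hΩQ ⟨(y p : Fin n → Λ), hyp⟩))
      rw [hxval]
      have : Submodule.inclusion hΩQ ⟨(y p : Fin n → Λ), hyp⟩ = y p := rfl
      rw [this, ← hp]
      abel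
    have hdiff : (x p, ((y p : Fin n → Λ))) - (k, (0 : Fin n → Λ))
        = (x p - k, ((y p : Fin n → Λ))) := by
      ext <;> simp
    rw [hdiff]
    exact Prod.ext hfst.symm rfl
  -- extend the inclusion `Kk → M` along `i : Kk → E`
  obtain ⟨h, hh⟩ := exists_extension_of_ext1zero hrigid Kk.subtype i hii π hπs hkerπ
  have hhi : ∀ k : ↥Kk, h (i k) = (k : M) := by
    intro k
    have := congrArg (fun g => g k) hh
    simpa using this
  -- the endomorphism `φ = h ∘ g` fixes `Kk` pointwise
  set φ : M →ₗ[Λ] M := h.comp g with hφdef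
  have hφk : ∀ k : ↥Kk, φ (k : M) = (k : M) := by
    intro k
    show h (g (k : M)) = (k : M)
    rw [hgκ, hhi]
  have hφnk : ∀ (nn : ℕ) (k : ↥Kk), (φ ^ nn) (k : M) = (k : M) := by
    intro nn
    induction nn with
    | zero => intro k; rfl
    | succ m ihm =>
      intro k
      rw [pow_succ, Module.End.mul_apply, hφk, ihm]
  -- Fitting's lemma: `φ` is bijective
  obtain ⟨N, hN⟩ := Filter.eventually_atTop.mp
    (LinearMap.eventually_isCompl_ker_pow_range_pow φ)
  have hcompl := hN (N + 1) (Nat.le_succ N)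
  have hφbij : Function.Bijective φ := by
    have hKkne : Kk ≠ ⊥ := by
      intro hbot
      exact hninj (LinearMap.ker_eq_bot.mp hbot)
    obtain ⟨k0, hk0mem, hk0ne⟩ := Submodule.ne_bot_iff Kk |>.mp hKkne
    rcases hind.2 _ _ hcompl with hker0 | hrange0
    · have hφinj : Function.Injective φ := by
        rw [← LinearMap.ker_eq_bot]
        rw [eq_bot_iff]
        intro z hz
        have : (φ ^ (N + 1)) z = 0 := by
          rw [pow_succ, Module.End.mul_apply, LinearMap.mem_ker.mp hz, map_zero]
        have : z ∈ LinearMap.ker (φ ^ (N + 1)) := this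
        rw [hker0] at this
        exact this
      exact ⟨hφinj, IsArtinian.surjective_of_injective_endomorphism φ hφinj⟩
    · exfalso
      have : (φ ^ (N + 1)) k0 ∈ LinearMap.range (φ ^ (N + 1)) :=
        LinearMap.mem_range_self _ k0
      rw [hrange0, Submodule.mem_bot, hφnk (N + 1) ⟨k0, hk0mem⟩] at this
      exact hk0ne this
  set ψ : M ≃ₗ[Λ] M := LinearEquiv.ofBijective φ hφbij with hψdef
  set h' : ((↥Kk × (Fin n → Λ)) ⧸ W) →ₗ[Λ] M := (ψ.symm : M →ₗ[Λ] M).comp h with hh'def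
  have hh'g : ∀ m, h' (g m) = m := by
    intro m
    show ψ.symm (h (g m)) = m
    have : h (g m) = ψ m := rfl
    rw [this, LinearEquiv.symm_apply_apply]
  -- `range g` and `ker h'` are complementary in `E`
  have hACinf : LinearMap.range g ⊓ LinearMap.ker h' = ⊥ := by
    rw [eq_bot_iff]
    rintro z ⟨⟨m, rfl⟩, hz2⟩
    have : m = 0 := by rw [← hh'g m]; exact hz2
    rw [this, map_zero]
    exact Submodule.zero_mem ⊥
  have hACsup : LinearMap.range g ⊔ LinearMap.ker h' = ⊤ := by
    rw [eq_top_iff]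
    intro e _
    rw [Submodule.mem_sup]
    refine ⟨g (h' e), LinearMap.mem_range_self g _, e - g (h' e), ?_, by abel⟩
    rw [LinearMap.mem_ker, map_sub, hh'g, sub_self]
  have hrangei_le : LinearMap.range i ≤ LinearMap.range g := by
    rintro _ ⟨k, rfl⟩
    exact ⟨(k : M), hgκ k⟩
  -- the two complementary submodules of `M`
  set D : Submodule Λ M := (LinearMap.ker h').map π with hDdef
  have hUDinf : Disjoint U D := by
    rw [disjoint_iff, eq_bot_iff]
    rintro z ⟨⟨m, rfl⟩, c, hc, hcz⟩
    have hcg : c - g m ∈ LinearMap.ker π := by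
      rw [LinearMap.mem_ker, map_sub, hπg, hcz]
      exact sub_self _
    have hcrange : c ∈ LinearMap.range g := by
      have h1 : c - g m ∈ LinearMap.range g := hrangei_le (hkerπ ▸ hcg)
      have := Submodule.add_mem _ h1 (LinearMap.mem_range_self g m)
      simpa using this
    have hc0 : c = 0 := by
      have : c ∈ LinearMap.range g ⊓ LinearMap.ker h' := ⟨hcrange, hc⟩
      rw [hACinf] at this
      exact this
    rw [← hcz, hc0, map_zero]
    exact Submodule.zero_mem ⊥
  have hUDsup : Codisjoint U D := by
    rw [codisjoint_iff, eq_top_iff]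
    intro m _
    obtain ⟨e, rfl⟩ := hπs m
    have he : e ∈ LinearMap.range g ⊔ LinearMap.ker h' := hACsup ▸ Submodule.mem_top
    obtain ⟨a, ⟨m', rfl⟩, c, hc, rfl⟩ := Submodule.mem_sup.mp he
    rw [Submodule.mem_sup]
    exact ⟨f m', ⟨m', rfl⟩, π c, ⟨c, hc, rfl⟩, by rw [map_add, hπg]⟩
  rcases hind.2 U D ⟨hUDinf, hUDsup⟩ with hU0 | hD0
  · exact hUne hU0
  · -- `D = ⊥` forces `g` surjective, hence `f` surjective, hence injective
    have hCbot : LinearMap.ker h' = ⊥ := by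
      rw [eq_bot_iff]
      intro c hc
      have hπc : π c = 0 := by
        have : π c ∈ D := ⟨c, hc, rfl⟩
        rw [hD0] at this
        exact this
      have : c ∈ LinearMap.range g := hrangei_le (hkerπ ▸ (LinearMap.mem_ker.mpr hπc))
      have : c ∈ LinearMap.range g ⊓ LinearMap.ker h' := ⟨this, hc⟩
      rw [hACinf] at this
      exact this
    have hgsurj : Function.Surjective g := by
      rw [← LinearMap.range_eq_top]
      rw [← hACsup, hCbot, sup_bot_eq]
    have hfsurj : Function.Surjective f := by
      intro m
      obtain ⟨e, he⟩ := hπs m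
      obtain ⟨m', rfl⟩ := hgsurj e
      exact ⟨m', by rw [← hπg]; exact he⟩
    exact hninj (IsNoetherian.injective_of_surjective_endomorphism f hfsurj)
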